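/- The weighted nuclear norm with non-increasing weights (w₁ ≥ w₂ ≥ ... ≥ w_n ≥ 0) is a convex function of the matrix; equivalently, ‖X‖_{w,*} = Σᵢ wᵢσᵢ(X) satisfies the triangle inequality ‖X + Y‖_{w,*} ≤ ‖X‖_{w,*} + ‖Y‖_{w,*} and absolute homogeneity when the weight sequence is non-increasing. -/

import Mathlib

/-!
Summation by parts writes `‖X‖_{w,*}` as `∑ₖ (wₖ - wₖ₊₁) Sₖ(X)` with nonnegative coefficients,
where `Sₖ` is the sum of the `k` largest singular values (the Ky Fan `k`-norm); so it suffices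
that each `Sₖ` is subadditive and absolutely homogeneous. Both follow from Ky Fan's variational
formula: `Sₖ(X)` is the maximum of `|∑ᵢ uᵢ ⬝ᵥ X rᵢ|` over families `(uᵢ)`, `(rᵢ)` of at most `k`
pairwise orthogonal vectors of length at most one. Indeed, expanding in singular vectors,
`∑ᵢ uᵢ ⬝ᵥ X rᵢ = ∑ⱼ σⱼ cⱼ` with `|cⱼ| ≤ 1` and `∑ⱼ |cⱼ| ≤ k` (Cauchy–Schwarz and Bessel), and
such a combination is at most the sum of the `k` largest `σⱼ`; the singular vectors themselves
attain the maximum. Homogeneity of each `σᵢ` then follows from `σᵢ = Sᵢ₊₁ - Sᵢ`.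
-/

open Matrix BigOperators

/-- Singular values of a real matrix (square roots of the eigenvalues of `XᵀX`). -/
noncomputable def sv {m n : ℕ} (X : Matrix (Fin m) (Fin n) ℝ) (i : Fin n) : ℝ :=
  Real.sqrt ((Matrix.isHermitian_conjTranspose_mul_self X).eigenvalues i)

/-- Singular values sorted in non-increasing order. -/
noncomputable def svSorted {m n : ℕ} (X : Matrix (Fin m) (Fin n) ℝ) (i : Fin n) : ℝ :=
  sv X (Tuple.sort (sv X) i.rev)

/-- Weighted nuclear norm `‖X‖_{w,*} = Σᵢ wᵢ σᵢ(X)` with sorted singular values. -/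
noncomputable def wnn {m n : ℕ} (w : Fin n → ℝ) (X : Matrix (Fin m) (Fin n) ℝ) : ℝ :=
  ∑ i, w i * svSorted X i

open Finset

section SubOrthonormal

variable {ι κ : Type*} {N : ℕ}

-- Weaker than orthonormality so that the left singular vectors, which vanish where `σⱼ = 0`,
-- qualify; Bessel's inequality still holds.
def SubOrthonormalOn (s : Finset ι) (u : ι → Fin N → ℝ) : Prop :=
  (∀ i ∈ s, u i ⬝ᵥ u i ≤ 1) ∧ ∀ i ∈ s, ∀ j ∈ s, i ≠ j → u i ⬝ᵥ u j = 0

theorem SubOrthonormalOn.comp {s : Finset ι} {u : ι → Fin N → ℝ} (hu : SubOrthonormalOn s u)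
    {t : Finset κ} {f : κ → ι} (hf : Set.InjOn f t) (hft : ∀ x ∈ t, f x ∈ s) :
    SubOrthonormalOn t (u ∘ f) :=
  ⟨fun i hi => hu.1 _ (hft i hi),
    fun i hi j hj hij => hu.2 _ (hft i hi) _ (hft j hj) fun h => hij (hf hi hj h)⟩

theorem SubOrthonormalOn.sum_sq_dotProduct_le {s : Finset ι} {u : ι → Fin N → ℝ}
    (hu : SubOrthonormalOn s u) (x : Fin N → ℝ) :
    ∑ i ∈ s, (u i ⬝ᵥ x) ^ 2 ≤ x ⬝ᵥ x := by
  classical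
  set c : ι → ℝ := fun i => u i ⬝ᵥ x
  set y : Fin N → ℝ := ∑ i ∈ s, c i • u i
  have hxy : x ⬝ᵥ y = ∑ i ∈ s, c i ^ 2 := by
    rw [dotProduct_comm, sum_dotProduct]
    simp only [smul_dotProduct, smul_eq_mul, sq, c]
  have hyy : y ⬝ᵥ y ≤ ∑ i ∈ s, c i ^ 2 := by
    have hterm : ∀ i ∈ s, u i ⬝ᵥ y = c i * (u i ⬝ᵥ u i) := by
      intro i hi
      simp only [y, dotProduct_sum, dotProduct_smul, smul_eq_mul]
      exact sum_eq_single_of_mem i hi fun j hj hji => by rw [hu.2 i hi j hj hji.symm, mul_zero]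
    calc y ⬝ᵥ y = ∑ i ∈ s, c i * (c i * (u i ⬝ᵥ u i)) := by
          simp only [y, sum_dotProduct, smul_dotProduct, smul_eq_mul]
          exact sum_congr rfl fun i hi => by rw [hterm i hi]
      _ ≤ ∑ i ∈ s, c i ^ 2 := sum_le_sum fun i hi => by
          nlinarith [hu.1 i hi, sq_nonneg (c i)]
  have h := dotProduct_self_star_nonneg (x - y)
  simp only [star_trivial, sub_dotProduct, dotProduct_sub, dotProduct_comm y x] at h
  linarith

end SubOrthonormal

theorem abs_sum_mul_le_one {ι : Type*} {s : Finset ι} {a b : ι → ℝ}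
    (ha : ∑ i ∈ s, a i ^ 2 ≤ 1) (hb : ∑ i ∈ s, b i ^ 2 ≤ 1) : |∑ i ∈ s, a i * b i| ≤ 1 := by
  rw [← sq_le_one_iff_abs_le_one]
  calc (∑ i ∈ s, a i * b i) ^ 2 ≤ (∑ i ∈ s, a i ^ 2) * ∑ i ∈ s, b i ^ 2 :=
        sum_mul_sq_le_sq_mul_sq s a b
    _ ≤ 1 := mul_le_one₀ ha (sum_nonneg fun i _ => sq_nonneg _) hb

theorem sum_abs_sum_mul_le_card {ι κ : Type*} [Fintype κ] {s : Finset ι} {a b : ι → κ → ℝ}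
    (ha : ∀ i ∈ s, ∑ j, a i j ^ 2 ≤ 1) (hb : ∀ i ∈ s, ∑ j, b i j ^ 2 ≤ 1) :
    ∑ j, |∑ i ∈ s, a i j * b i j| ≤ #s := by
  have hrow : ∀ i ∈ s, ∑ j, |a i j| * |b i j| ≤ 1 := fun i hi =>
    (le_abs_self _).trans (abs_sum_mul_le_one (by simpa only [sq_abs] using ha i hi)
      (by simpa only [sq_abs] using hb i hi))
  calc ∑ j, |∑ i ∈ s, a i j * b i j| ≤ ∑ j, ∑ i ∈ s, |a i j| * |b i j| :=
        sum_le_sum fun j _ => (abs_sum_le_sum_abs _ _).trans_eq (by simp only [abs_mul])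
    _ = ∑ i ∈ s, ∑ j, |a i j| * |b i j| := sum_comm
    _ ≤ ∑ i ∈ s, 1 := sum_le_sum hrow
    _ = #s := by simp

theorem Antitone.sum_mul_le_sum_val_lt {n : ℕ} {g e : Fin n → ℝ} (hg : Antitone g)
    (hg0 : ∀ i, 0 ≤ g i) (he0 : ∀ i, 0 ≤ e i) (he1 : ∀ i, e i ≤ 1) {k : ℕ}
    (hek : ∑ i, e i ≤ k) : ∑ i, g i * e i ≤ ∑ i with i.val < k, g i := by
  rcases le_or_gt n k with hnk | hkn
  · rw [filter_true_of_mem fun i _ => i.isLt.trans_le hnk]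
    exact sum_le_sum fun i _ => mul_le_of_le_one_right (hg0 i) (he1 i)
  -- `c = g k` separates the first `k` values of `g` from the others
  set c := g ⟨k, hkn⟩
  have hpoint : ∀ i : Fin n, g i * e i ≤
      (if i.val < k then g i else 0) + c * (e i - if i.val < k then 1 else 0) := by
    intro i
    split_ifs with hik
    · have : c ≤ g i := hg (Fin.mk_le_of_le_val hik.le)
      nlinarith [he1 i]
    · have : g i ≤ c := hg (Fin.le_def.mpr (by simpa using hik))
      nlinarith [he0 i]
  have hcard : ∑ i : Fin n, (if i.val < k then (1 : ℝ) else 0) = k := by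
    rw [← sum_filter, sum_const, Fin.card_filter_val_lt, min_eq_right hkn.le, nsmul_one]
  calc ∑ i, g i * e i
      ≤ ∑ i, ((if i.val < k then g i else 0) + c * (e i - if i.val < k then 1 else 0)) :=
        sum_le_sum fun i _ => hpoint i
    _ = (∑ i with i.val < k, g i) + c * (∑ i, e i - k) := by
        rw [sum_add_distrib, ← mul_sum, sum_sub_distrib, hcard, sum_filter]
    _ ≤ ∑ i with i.val < k, g i :=
        add_le_of_nonpos_right (mul_nonpos_of_nonneg_of_nonpos (hg0 _) (sub_nonpos.mpr hek))

theorem sum_range_mul_nonpos_of_partial_sums_nonpos {w d : ℕ → ℝ} {n : ℕ} (hw : Antitone w)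
    (hw0 : 0 ≤ w (n - 1)) (hd : ∀ k ≤ n, ∑ i ∈ range k, d i ≤ 0) :
    ∑ i ∈ range n, w i * d i ≤ 0 := by
  have hparts := sum_range_by_parts w d n
  simp only [smul_eq_mul] at hparts
  rw [hparts, sub_nonpos]
  calc w (n - 1) * ∑ i ∈ range n, d i ≤ 0 := mul_nonpos_of_nonneg_of_nonpos hw0 (hd n le_rfl)
    _ ≤ _ := sum_nonneg fun i hi => mul_nonneg_of_nonpos_of_nonpos
        (sub_nonpos.mpr (hw (Nat.le_succ i))) (hd _ (by have := mem_range.mp hi; omega))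

theorem Fin.sum_val_lt_eq_sum_range {M : Type*} [AddCommMonoid M] {n k : ℕ} (hk : k ≤ n)
    (f : ℕ → M) : ∑ i : Fin n with i.val < k, f i = ∑ i ∈ range k, f i := by
  calc _ = ∑ i ∈ (univ.filter fun i : Fin n => i.val < k).map Fin.valEmbedding, f i :=
        (sum_map _ _ _).symm
    _ = _ := congrArg (Finset.sum · f) ?_
  ext i
  simp only [mem_map, mem_filter, mem_univ, true_and, Fin.valEmbedding_apply, mem_range]
  exact ⟨fun ⟨j, hj, hji⟩ => hji ▸ hj, fun hi => ⟨⟨i, by omega⟩, hi, rfl⟩⟩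

theorem Fin.sum_mul_le_sum_mul_of_sum_val_lt_le {n : ℕ} {w a b : Fin n → ℝ} (hw : Antitone w)
    (hw0 : ∀ i, 0 ≤ w i) (hab : ∀ k, ∑ i with i.val < k, a i ≤ ∑ i with i.val < k, b i) :
    ∑ i, w i * a i ≤ ∑ i, w i * b i := by
  let ext : (Fin n → ℝ) → ℕ → ℝ := fun f i => if h : i < n then f ⟨i, h⟩ else 0
  have hext (f : Fin n → ℝ) (i : Fin n) : ext f i = f i := dif_pos i.isLt
  have hext_antitone : Antitone (ext w) := by
    intro i j hij
    simp only [ext]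
    split_ifs with hj hi hi
    · exact hw (Fin.mk_le_mk.mpr hij)
    · omega
    · exact hw0 _
    · exact le_rfl
  have hlast : 0 ≤ ext w (n - 1) := by
    rcases n with _ | n
    · simp [ext]
    · rw [Nat.add_sub_cancel, ← Fin.val_last n, hext]
      exact hw0 _
  rw [← sub_nonpos, ← sum_sub_distrib]
  have key := sum_range_mul_nonpos_of_partial_sums_nonpos (d := ext (a - b)) hext_antitone hlast
    fun k hk => by
      rw [← Fin.sum_val_lt_eq_sum_range hk]
      simp only [hext, Pi.sub_apply, sum_sub_distrib]
      linarith [hab k]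
  rw [← Fin.sum_univ_eq_sum_range] at key
  simpa [hext, mul_sub] using key

section SingularVectors

variable {m n : ℕ} (X : Matrix (Fin m) (Fin n) ℝ)

noncomputable def rightSingularVector (j : Fin n) : Fin n → ℝ :=
  ⇑((isHermitian_conjTranspose_mul_self X).eigenvectorBasis j)

-- `0` when `σⱼ = 0`, since `0⁻¹ = 0`.
noncomputable def leftSingularVector (j : Fin n) : Fin m → ℝ :=
  (sv X j)⁻¹ • (X *ᵥ rightSingularVector X j)

theorem sv_nonneg (j : Fin n) : 0 ≤ sv X j := Real.sqrt_nonneg _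

theorem rightSingularVector_dotProduct (i j : Fin n) :
    rightSingularVector X i ⬝ᵥ rightSingularVector X j = if i = j then 1 else 0 := by
  have h := orthonormal_iff_ite.mp
    (isHermitian_conjTranspose_mul_self X).eigenvectorBasis.orthonormal i j
  rwa [EuclideanSpace.inner_eq_star_dotProduct, star_trivial, dotProduct_comm] at h

theorem conjTranspose_mul_self_mulVec_rightSingularVector (j : Fin n) :
    (Xᴴ * X) *ᵥ rightSingularVector X j = sv X j ^ 2 • rightSingularVector X j := by
  rw [sv, Real.sq_sqrt (eigenvalues_conjTranspose_mul_self_nonneg X j)]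
  exact (isHermitian_conjTranspose_mul_self X).mulVec_eigenvectorBasis j

theorem mulVec_rightSingularVector_dotProduct (i j : Fin n) :
    X *ᵥ rightSingularVector X i ⬝ᵥ X *ᵥ rightSingularVector X j
      = if i = j then sv X j ^ 2 else 0 := by
  rw [← vecMul_transpose, ← dotProduct_mulVec, mulVec_mulVec,
    ← conjTranspose_eq_transpose_of_trivial, conjTranspose_mul_self_mulVec_rightSingularVector,
    dotProduct_smul, rightSingularVector_dotProduct, smul_eq_mul, mul_ite, mul_one, mul_zero]

theorem mulVec_rightSingularVector (j : Fin n) :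
    X *ᵥ rightSingularVector X j = sv X j • leftSingularVector X j := by
  rcases eq_or_ne (sv X j) 0 with h | h
  · have hsq := mulVec_rightSingularVector_dotProduct X j j
    rw [if_pos rfl, h, zero_pow two_ne_zero, dotProduct_self_eq_zero] at hsq
    rw [hsq, h, zero_smul]
  · rw [leftSingularVector, smul_smul, mul_inv_cancel₀ h, one_smul]

theorem leftSingularVector_dotProduct (i j : Fin n) :
    leftSingularVector X i ⬝ᵥ leftSingularVector X j
      = if i = j ∧ sv X j ≠ 0 then 1 else 0 := by
  simp only [leftSingularVector, smul_dotProduct, dotProduct_smul,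
    mulVec_rightSingularVector_dotProduct, smul_eq_mul]
  by_cases hij : i = j
  · subst hij
    by_cases h : sv X i = 0
    · simp [h]
    · simp [h, sq]
  · simp [hij]

theorem leftSingularVector_dotProduct_mulVec_rightSingularVector (j : Fin n) :
    leftSingularVector X j ⬝ᵥ X *ᵥ rightSingularVector X j = sv X j := by
  rw [mulVec_rightSingularVector, dotProduct_smul, leftSingularVector_dotProduct, smul_eq_mul]
  by_cases h : sv X j = 0 <;> simp [h]

theorem subOrthonormalOn_rightSingularVector (s : Finset (Fin n)) :
    SubOrthonormalOn s (rightSingularVector X) :=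
  ⟨fun i _ => by simp [rightSingularVector_dotProduct],
    fun i _ j _ hij => by simp [rightSingularVector_dotProduct, hij]⟩

theorem subOrthonormalOn_leftSingularVector (s : Finset (Fin n)) :
    SubOrthonormalOn s (leftSingularVector X) :=
  ⟨fun i _ => by rw [leftSingularVector_dotProduct]; split_ifs <;> norm_num,
    fun i _ j _ hij => by simp [leftSingularVector_dotProduct, hij]⟩

theorem eq_sum_rightSingularVector (a : Fin n → ℝ) :
    a = ∑ j, (rightSingularVector X j ⬝ᵥ a) • rightSingularVector X j := by
  have h := congrArg WithLp.ofLp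
    ((isHermitian_conjTranspose_mul_self X).eigenvectorBasis.sum_repr' (WithLp.toLp 2 a))
  simp only [EuclideanSpace.inner_eq_star_dotProduct, star_trivial, WithLp.ofLp_sum,
    WithLp.ofLp_smul] at h
  nth_rw 1 [← h]
  simp [rightSingularVector, dotProduct_comm]

theorem dotProduct_mulVec_eq_sum_sv (u : Fin m → ℝ) (a : Fin n → ℝ) :
    u ⬝ᵥ X *ᵥ a = ∑ j, sv X j *
      ((rightSingularVector X j ⬝ᵥ a) * (u ⬝ᵥ leftSingularVector X j)) := by
  conv_lhs => rw [eq_sum_rightSingularVector X a, mulVec_sum]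
  simp only [mulVec_smul, mulVec_rightSingularVector, dotProduct_sum, dotProduct_smul,
    smul_eq_mul]
  exact sum_congr rfl fun j _ => by ring

end SingularVectors

section KyFan

variable {m n : ℕ} (X Y : Matrix (Fin m) (Fin n) ℝ)

noncomputable def svPerm : Equiv.Perm (Fin n) :=
  Fin.revPerm.trans (Tuple.sort (sv X))

theorem svSorted_eq_sv_svPerm (i : Fin n) : svSorted X i = sv X (svPerm X i) := rfl

theorem svSorted_antitone : Antitone (svSorted X) :=
  fun _ _ h => Tuple.monotone_sort (sv X) (Fin.rev_le_rev.mpr h)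

theorem svSorted_nonneg (i : Fin n) : 0 ≤ svSorted X i := sv_nonneg X _

noncomputable def kyFanNorm (k : ℕ) : ℝ := ∑ i with i.val < k, svSorted X i

theorem kyFanNorm_nonneg (k : ℕ) : 0 ≤ kyFanNorm X k :=
  sum_nonneg fun i _ => svSorted_nonneg X i

theorem abs_sum_dotProduct_mulVec_le_kyFanNorm {ι : Type*} {s : Finset ι} {k : ℕ}
    (hs : #s ≤ k) {u : ι → Fin m → ℝ} {r : ι → Fin n → ℝ}
    (hu : SubOrthonormalOn s u) (hr : SubOrthonormalOn s r) :
    |∑ i ∈ s, u i ⬝ᵥ X *ᵥ r i| ≤ kyFanNorm X k := by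
  set a : ι → Fin n → ℝ := fun i j => rightSingularVector X j ⬝ᵥ r i
  set b : ι → Fin n → ℝ := fun i j => u i ⬝ᵥ leftSingularVector X j
  set c : Fin n → ℝ := fun j => ∑ i ∈ s, a i j * b i j
  have hv := subOrthonormalOn_rightSingularVector X univ
  have hp := subOrthonormalOn_leftSingularVector X univ
  have hsum : ∑ i ∈ s, u i ⬝ᵥ X *ᵥ r i = ∑ j, sv X j * c j := by
    simp only [dotProduct_mulVec_eq_sum_sv X, c, mul_sum]
    exact sum_comm
  have hc_le_one : ∀ j, |c j| ≤ 1 := fun j => abs_sum_mul_le_one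
    (by simpa only [a, dotProduct_comm] using
      (hr.sum_sq_dotProduct_le _).trans (hv.1 j (mem_univ j)))
    ((hu.sum_sq_dotProduct_le _).trans (hp.1 j (mem_univ j)))
  have hc_sum : ∑ j, |c j| ≤ k := (sum_abs_sum_mul_le_card
    (fun i hi => by simpa only [a, dotProduct_comm] using
      (hv.sum_sq_dotProduct_le _).trans (hr.1 i hi))
    (fun i hi => by simpa only [b, dotProduct_comm] using
      (hp.sum_sq_dotProduct_le _).trans (hu.1 i hi))).trans (by exact_mod_cast hs)
  rw [hsum]
  calc |∑ j, sv X j * c j| ≤ ∑ j, sv X j * |c j| :=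
        (abs_sum_le_sum_abs _ _).trans_eq
          (sum_congr rfl fun j _ => by rw [abs_mul, abs_of_nonneg (sv_nonneg X j)])
    _ = ∑ i, svSorted X i * |c (svPerm X i)| := (Equiv.sum_comp (svPerm X) _).symm
    _ ≤ kyFanNorm X k := (svSorted_antitone X).sum_mul_le_sum_val_lt (svSorted_nonneg X)
        (fun _ => abs_nonneg _) (fun _ => hc_le_one _)
        (by rwa [Equiv.sum_comp (svPerm X) fun j => |c j|])

theorem exists_kyFanNorm_eq_sum (k : ℕ) :
    ∃ (s : Finset (Fin n)) (u : Fin n → Fin m → ℝ) (r : Fin n → Fin n → ℝ),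
      #s ≤ k ∧ SubOrthonormalOn s u ∧ SubOrthonormalOn s r ∧
      kyFanNorm X k = ∑ i ∈ s, u i ⬝ᵥ X *ᵥ r i := by
  refine ⟨_, leftSingularVector X ∘ svPerm X, rightSingularVector X ∘ svPerm X,
    Fin.card_filter_val_lt.trans_le (min_le_right n k),
    (subOrthonormalOn_leftSingularVector X univ).comp (svPerm X).injective.injOn
      fun _ _ => mem_univ _,
    (subOrthonormalOn_rightSingularVector X univ).comp (svPerm X).injective.injOn
      fun _ _ => mem_univ _, ?_⟩
  simp only [kyFanNorm, Function.comp_apply,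
    leftSingularVector_dotProduct_mulVec_rightSingularVector, svSorted_eq_sv_svPerm]

theorem kyFanNorm_add_le (k : ℕ) : kyFanNorm (X + Y) k ≤ kyFanNorm X k + kyFanNorm Y k := by
  obtain ⟨s, u, r, hs, hu, hr, heq⟩ := exists_kyFanNorm_eq_sum (X + Y) k
  rw [heq]
  simp only [add_mulVec, dotProduct_add, sum_add_distrib]
  exact add_le_add ((le_abs_self _).trans (abs_sum_dotProduct_mulVec_le_kyFanNorm X hs hu hr))
    ((le_abs_self _).trans (abs_sum_dotProduct_mulVec_le_kyFanNorm Y hs hu hr))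

theorem kyFanNorm_smul (c : ℝ) (k : ℕ) : kyFanNorm (c • X) k = |c| * kyFanNorm X k := by
  apply le_antisymm
  · obtain ⟨s, u, r, hs, hu, hr, heq⟩ := exists_kyFanNorm_eq_sum (c • X) k
    rw [heq]
    simp only [smul_mulVec, dotProduct_smul, smul_eq_mul, ← mul_sum]
    calc _ ≤ |c * ∑ i ∈ s, u i ⬝ᵥ X *ᵥ r i| := le_abs_self _
      _ ≤ _ := by
        rw [abs_mul]
        exact mul_le_mul_of_nonneg_left
          (abs_sum_dotProduct_mulVec_le_kyFanNorm X hs hu hr) (abs_nonneg c)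
  · obtain ⟨s, u, r, hs, hu, hr, heq⟩ := exists_kyFanNorm_eq_sum X k
    calc |c| * kyFanNorm X k = |∑ i ∈ s, u i ⬝ᵥ (c • X) *ᵥ r i| := by
          simp only [smul_mulVec, dotProduct_smul, smul_eq_mul, ← mul_sum, abs_mul, ← heq,
            abs_of_nonneg (kyFanNorm_nonneg X k)]
      _ ≤ _ := abs_sum_dotProduct_mulVec_le_kyFanNorm (c • X) hs hu hr

theorem kyFanNorm_succ (i : Fin n) :
    kyFanNorm X (i.val + 1) = kyFanNorm X i.val + svSorted X i := by
  simp only [kyFanNorm, sum_filter]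
  rw [show svSorted X i = ∑ j, if j = i then svSorted X j else 0 by simp, ← sum_add_distrib]
  refine sum_congr rfl fun j _ => ?_
  split_ifs <;> simp_all [Fin.ext_iff] <;> omega

theorem svSorted_smul (c : ℝ) (i : Fin n) : svSorted (c • X) i = |c| * svSorted X i := by
  have h := kyFanNorm_succ (c • X) i
  rw [kyFanNorm_smul, kyFanNorm_smul, kyFanNorm_succ] at h
  linarith

end KyFan

/-- With non-increasing nonnegative weights, the weighted nuclear norm satisfies the
triangle inequality and absolute homogeneity. -/
theorem stmt8 {m n : ℕ} (w : Fin n → ℝ) (hwnn : ∀ i, 0 ≤ w i)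
    (hwmono : ∀ i j : Fin n, i ≤ j → w j ≤ w i) :
    (∀ X Y : Matrix (Fin m) (Fin n) ℝ, wnn w (X + Y) ≤ wnn w X + wnn w Y) ∧
    (∀ (c : ℝ) (X : Matrix (Fin m) (Fin n) ℝ), wnn w (c • X) = |c| * wnn w X) := by
  refine ⟨fun X Y => ?_, fun c X => ?_⟩
  · simp only [wnn, ← sum_add_distrib, ← mul_add]
    refine Fin.sum_mul_le_sum_mul_of_sum_val_lt_le hwmono hwnn fun k => ?_
    rw [sum_add_distrib]
    exact kyFanNorm_add_le X Y k
  · simp only [wnn, svSorted_smul, mul_sum]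
    exact sum_congr rfl fun i _ => mul_left_comm _ _ _
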